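/- There exists a universal constant C > 0 such that the following holds for all sufficiently large d (d ≥ 2): let f : {-1,1}^n → [0,1] be a polynomial of degree d with Var[f] ≥ 1/d. Then the fraction of inputs x ∈ {-1,1}^n that are (1, Var[f]/d^C)-sensitive, i.e. for which there exists a coordinate i ∈ [n] with |f(x) − f(x^{(i)})| ≥ Var[f]/d^C, is at least Var[f]³/d^C. -/

import Mathlib

open Finset

noncomputable section

/-- The ±1 value of a Boolean bit: `true ↦ 1`, `false ↦ -1`. -/
def sgnB (b : Bool) : ℝ := if b then 1 else -1

/-- The character `χ_S(x) = ∏_{i ∈ S} x_i` on the Boolean cube. -/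
def chiB {n : ℕ} (S : Finset (Fin n)) (x : Fin n → Bool) : ℝ := ∏ i ∈ S, sgnB (x i)

/-- Expectation over a uniformly random point of the cube `{-1,1}^n`. -/
def bexpect {n : ℕ} (f : (Fin n → Bool) → ℝ) : ℝ := (∑ x : Fin n → Bool, f x) / 2 ^ n

/-- The Fourier coefficient `f̂(S) = E_x [f(x) χ_S(x)]`. -/
def fCoeff {n : ℕ} (f : (Fin n → Bool) → ℝ) (S : Finset (Fin n)) : ℝ :=
  bexpect (fun x => f x * chiB S x)

/-- `f` has degree at most `d`: all Fourier coefficients above level `d` vanish. -/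
def degLE {n : ℕ} (f : (Fin n → Bool) → ℝ) (d : ℕ) : Prop :=
  ∀ S : Finset (Fin n), d < S.card → fCoeff f S = 0

/-- `Var[f] = Σ_{S ≠ ∅} f̂(S)²`. -/
def totalVar {n : ℕ} (f : (Fin n → Bool) → ℝ) : ℝ :=
  ∑ S ∈ univ.filter (fun S : Finset (Fin n) => S ≠ ∅), (fCoeff f S) ^ 2

/-- `Inf_j[f] = Σ_{S ∋ j} f̂(S)²`. -/
def influence {n : ℕ} (f : (Fin n → Bool) → ℝ) (j : Fin n) : ℝ :=
  ∑ S ∈ univ.filter (fun S : Finset (Fin n) => j ∈ S), (fCoeff f S) ^ 2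

/-- The restriction `f_ρ` for `ρ = (S, y)`: alive coordinates from `z`, dead ones from `y`.
(The restricted function is encoded as a function on the full cube which only depends on
the coordinates in `S`.) -/
def restrictFn {n : ℕ} (f : (Fin n → Bool) → ℝ) (S : Finset (Fin n)) (y : Fin n → Bool) :
    (Fin n → Bool) → ℝ :=
  fun z => f (fun i => if i ∈ S then z i else y i)

/-- Probability that the alive set of a random restriction with survival probability `p`
equals `S`. -/
def aliveProb {n : ℕ} (p : ℝ) (S : Finset (Fin n)) : ℝ :=
  p ^ S.card * (1 - p) ^ (n - S.card)

/-- Expectation over a random restriction `ρ = (S, y)` with survival probability `p`: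
each coordinate is alive independently with probability `p`, and dead coordinates get
independent uniform bits.  (`y` is sampled as a full uniform point of the cube; its values
on alive coordinates are irrelevant whenever the integrand ignores them.) -/
def rexpect {n : ℕ} (p : ℝ) (G : Finset (Fin n) → (Fin n → Bool) → ℝ) : ℝ :=
  ∑ S : Finset (Fin n), aliveProb p S * bexpect (fun y => G S y)

open Classical in
/-- Probability of an event under a random restriction with survival probability `p`. -/
def rprob {n : ℕ} (p : ℝ) (E : Finset (Fin n) → (Fin n → Bool) → Prop) : ℝ :=
  rexpect p (fun S y => if E S y then 1 else 0)

/-!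
Poincaré's inequality bounds `4 Var[f]` by `𝔼_x Σ_i (f x - f x⁽ⁱ⁾)²`. Restricting the multilinear
extension of `f` to a segment of the cube that ends at a vertex `x` gives a real polynomial of
degree `≤ d` with values in `[0, 1]`, whose derivative at the endpoint is a nonnegatively weighted
sum of the differences `f x - f x⁽ⁱ⁾`. Markov's inequality `|p'(1)| ≤ d² ‖p‖_{[-1,1]}` therefore
gives `Σ_i |f x - f x⁽ⁱ⁾| ≤ 2d²` at every vertex. The sum of squares is then at most `2d²` at every
vertex and at most `2d²ε` at a vertex where all differences are below `ε`, so
`4 Var[f] ≤ 2d² (Pr[x is (1, ε)-sensitive] + ε)`; taking `ε = Var[f]/d³` gives the claim with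
`C = 3`.
-/

open Polynomial

section BooleanFourier

variable {n : ℕ}

lemma sgnB_mul_self (b : Bool) : sgnB b * sgnB b = 1 := by cases b <;> simp [sgnB]

lemma abs_sgnB (b : Bool) : |sgnB b| = 1 := by cases b <;> simp [sgnB]

lemma sgnB_not (b : Bool) : sgnB (!b) = -sgnB b := by cases b <;> simp [sgnB]

/-- The probability of `z` under the product distribution on the cube with `𝔼[z_i] = y_i`. -/
def biasedWeight (y : Fin n → ℝ) (z : Fin n → Bool) : ℝ := ∏ i, (1 + y i * sgnB (z i)) / 2

def multilinExt (f : (Fin n → Bool) → ℝ) (y : Fin n → ℝ) : ℝ :=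
  ∑ S, fCoeff f S * ∏ i ∈ S, y i

lemma prod_one_add_mul_sgnB (y : Fin n → ℝ) (z : Fin n → Bool) :
    ∏ i, (1 + y i * sgnB (z i)) = ∑ S, (∏ i ∈ S, y i) * chiB S z := by
  rw [Finset.prod_one_add, Finset.powerset_univ]
  simp [chiB, Finset.prod_mul_distrib]

lemma multilinExt_eq_sum_biasedWeight (f : (Fin n → Bool) → ℝ) (y : Fin n → ℝ) :
    multilinExt f y = ∑ z, biasedWeight y z * f z := by
  simp only [biasedWeight, Finset.prod_div_distrib, prod_one_add_mul_sgnB, Finset.prod_const,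
    Finset.card_univ, Fintype.card_fin, multilinExt, fCoeff, bexpect, Finset.sum_div,
    Finset.sum_mul]
  rw [Finset.sum_comm]
  refine Finset.sum_congr rfl fun S _ => Finset.sum_congr rfl fun z _ => ?_
  ring

lemma biasedWeight_nonneg {y : Fin n → ℝ} (hy : ∀ i, |y i| ≤ 1) (z : Fin n → Bool) :
    0 ≤ biasedWeight y z := by
  refine Finset.prod_nonneg fun i _ => div_nonneg ?_ zero_le_two
  have h : |y i * sgnB (z i)| ≤ 1 := by rw [abs_mul, abs_sgnB, mul_one]; exact hy i
  linarith [(abs_le.mp h).1]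

lemma sum_biasedWeight (y : Fin n → ℝ) : ∑ z, biasedWeight y z = 1 := by
  simp only [biasedWeight]
  rw [← Fintype.prod_sum fun i (b : Bool) => (1 + y i * sgnB b) / 2]
  refine Finset.prod_eq_one fun i _ => ?_
  rw [Fintype.sum_bool]
  simp only [sgnB, if_true, Bool.false_eq_true, if_false]
  ring

lemma biasedWeight_sgnB (x z : Fin n → Bool) :
    biasedWeight (fun i => sgnB (x i)) z = if z = x then 1 else 0 := by
  split_ifs with h
  · subst h
    simp [biasedWeight, sgnB_mul_self]
  · obtain ⟨i, hi⟩ := Function.ne_iff.mp h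
    refine Finset.prod_eq_zero (Finset.mem_univ i) ?_
    cases hx : x i <;> cases hz : z i <;> simp_all [sgnB]

theorem sum_fCoeff_mul_chiB (f : (Fin n → Bool) → ℝ) (x : Fin n → Bool) :
    ∑ S, fCoeff f S * chiB S x = f x := by
  have := multilinExt_eq_sum_biasedWeight f fun i => sgnB (x i)
  simpa [multilinExt, chiB, biasedWeight_sgnB] using this

lemma multilinExt_mem_Icc {f : (Fin n → Bool) → ℝ} {a b : ℝ} (hf : ∀ z, f z ∈ Set.Icc a b)
    {y : Fin n → ℝ} (hy : ∀ i, |y i| ≤ 1) : multilinExt f y ∈ Set.Icc a b := by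
  rw [multilinExt_eq_sum_biasedWeight]
  exact (convex_Icc a b).sum_mem (fun z _ => biasedWeight_nonneg hy z) (sum_biasedWeight y)
    fun z _ => hf z

theorem sum_fCoeff_sq (f : (Fin n → Bool) → ℝ) :
    ∑ S, fCoeff f S ^ 2 = bexpect fun x => f x ^ 2 := by
  calc ∑ S, fCoeff f S ^ 2 = (∑ x, f x * ∑ S, fCoeff f S * chiB S x) / 2 ^ n := by
        simp only [sq, fCoeff, bexpect, Finset.mul_sum, Finset.sum_div]
        rw [Finset.sum_comm]
        refine Finset.sum_congr rfl fun S _ => Finset.sum_congr rfl fun x _ => ?_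
        ring
    _ = bexpect fun x => f x ^ 2 := by simp only [sum_fCoeff_mul_chiB, bexpect, sq]

def flipAt (i : Fin n) (x : Fin n → Bool) : Fin n → Bool := Function.update x i (!x i)

lemma flipAt_involutive (i : Fin n) : Function.Involutive (flipAt i) := by
  intro x
  simp [flipAt]

lemma chiB_flipAt (S : Finset (Fin n)) (i : Fin n) (x : Fin n → Bool) :
    chiB S (flipAt i x) = (if i ∈ S then -1 else 1) * chiB S x := by
  have hne : ∀ j ∈ S.erase i, sgnB (flipAt i x j) = sgnB (x j) := fun j hj => by
    simp [flipAt, Function.update_of_ne (Finset.ne_of_mem_erase hj)]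
  split_ifs with hi
  · rw [chiB, chiB, ← Finset.mul_prod_erase _ _ hi, ← Finset.mul_prod_erase _ _ hi,
      Finset.prod_congr rfl hne]
    simp [flipAt, sgnB_not]
  · rw [one_mul, chiB, chiB, ← Finset.erase_eq_of_notMem hi]
    exact Finset.prod_congr rfl hne

lemma fCoeff_sub_comp_flipAt (f : (Fin n → Bool) → ℝ) (i : Fin n) (S : Finset (Fin n)) :
    fCoeff (fun x => f x - f (flipAt i x)) S = if i ∈ S then 2 * fCoeff f S else 0 := by
  have hflip : ∑ x, f (flipAt i x) * chiB S x = ∑ x, f x * chiB S (flipAt i x) := by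
    conv_rhs => rw [← Equiv.sum_comp (flipAt_involutive i).toPerm]
    simp [flipAt_involutive i _]
  simp only [fCoeff, bexpect, sub_mul, Finset.sum_sub_distrib, hflip, chiB_flipAt]
  split_ifs <;> simp only [neg_one_mul, one_mul, mul_neg, Finset.sum_neg_distrib] <;> ring

lemma four_mul_influence (f : (Fin n → Bool) → ℝ) (i : Fin n) :
    4 * influence f i = bexpect fun x => (f x - f (flipAt i x)) ^ 2 := by
  rw [← sum_fCoeff_sq, influence, Finset.sum_filter, Finset.mul_sum]
  refine Finset.sum_congr rfl fun S _ => ?_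
  rw [fCoeff_sub_comp_flipAt]
  split_ifs <;> ring

lemma totalVar_le_sum_influence (f : (Fin n → Bool) → ℝ) :
    totalVar f ≤ ∑ i, influence f i := by
  have hcard : ∑ i, influence f i = ∑ S, (S.card : ℝ) * fCoeff f S ^ 2 := by
    simp only [influence, Finset.sum_filter]
    rw [Finset.sum_comm]
    simp [Finset.sum_ite_mem]
  rw [hcard, totalVar, Finset.sum_filter]
  refine Finset.sum_le_sum fun S _ => ?_
  split_ifs with hS
  · have : (1 : ℝ) ≤ S.card := by
      exact_mod_cast Finset.card_pos.mpr (Finset.nonempty_iff_ne_empty.mpr hS)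
    nlinarith [sq_nonneg (fCoeff f S)]
  · positivity

theorem four_mul_totalVar_le (f : (Fin n → Bool) → ℝ) :
    4 * totalVar f ≤ bexpect fun x => ∑ i, (f x - f (flipAt i x)) ^ 2 := by
  calc 4 * totalVar f ≤ ∑ i, 4 * influence f i := by
        rw [← Finset.mul_sum]; linarith [totalVar_le_sum_influence f]
    _ = bexpect fun x => ∑ i, (f x - f (flipAt i x)) ^ 2 := by
        simp only [four_mul_influence, bexpect, ← Finset.sum_div]
        rw [Finset.sum_comm]

lemma totalVar_nonneg (f : (Fin n → Bool) → ℝ) : 0 ≤ totalVar f :=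
  Finset.sum_nonneg fun _ _ => sq_nonneg _

lemma totalVar_le_one {f : (Fin n → Bool) → ℝ} (hf : ∀ x, |f x| ≤ 1) : totalVar f ≤ 1 := by
  calc totalVar f ≤ ∑ S, fCoeff f S ^ 2 :=
        Finset.sum_le_sum_of_subset_of_nonneg (Finset.filter_subset _ _)
          fun _ _ _ => sq_nonneg _
    _ = bexpect fun x => f x ^ 2 := sum_fCoeff_sq f
    _ ≤ 1 := by
        rw [bexpect, div_le_one (by positivity)]
        calc ∑ x, f x ^ 2 ≤ ∑ _x : Fin n → Bool, (1 : ℝ) :=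
              Finset.sum_le_sum fun x _ => by nlinarith [abs_le.mp (hf x), sq_abs (f x)]
          _ = 2 ^ n := by simp

lemma sum_fCoeff_mul_chiB_of_mem (f : (Fin n → Bool) → ℝ) (i : Fin n) (x : Fin n → Bool) :
    ∑ S with i ∈ S, fCoeff f S * chiB S x = (f x - f (flipAt i x)) / 2 := by
  rw [← sum_fCoeff_mul_chiB f x, ← sum_fCoeff_mul_chiB f (flipAt i x), ← Finset.sum_sub_distrib,
    Finset.sum_div, Finset.sum_filter]
  refine Finset.sum_congr rfl fun S _ => ?_
  rw [chiB_flipAt]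
  split_ifs <;> ring

end BooleanFourier

theorem abs_derivative_eval_one_le {P : ℝ[X]} {d : ℕ} (hdeg : P.natDegree ≤ d)
    (hP : ∀ t ∈ Set.Icc (-1 : ℝ) 1, |P.eval t| ≤ 1) : |(derivative P).eval 1| ≤ d ^ 2 := by
  have markov : ∀ Q : ℝ[X], Q.natDegree ≤ d → (∀ t ∈ Set.Icc (-1 : ℝ) 1, |Q.eval t| ≤ 1) →
      (derivative Q).eval 1 ≤ d ^ 2 := fun Q hQdeg hQ => by
    have := Chebyshev.eval_iterate_derivative_le_of_forall_abs_le_one (k := 1) le_rfl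
      (degree_le_of_natDegree_le hQdeg) hQ
    simpa [Chebyshev.derivative_T_eval_one] using this
  have hneg := markov (-P) (by rwa [natDegree_neg]) fun t ht => by
    rw [eval_neg, abs_neg]; exact hP t ht
  rw [derivative_neg, eval_neg] at hneg
  exact abs_le.mpr ⟨by linarith, markov P hdeg hP⟩

section Sensitivity

variable {n : ℕ}

/-- The path `y_i(t) = x_i (1 - w_i (1 - t))` ends at the vertex `x` at `t = 1` and stays in the
cube for `t ∈ [-1, 1]` when `w ∈ [0, 1]ⁿ`. -/
def segmentPoly (f : (Fin n → Bool) → ℝ) (x : Fin n → Bool) (w : Fin n → ℝ) : ℝ[X] :=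
  ∑ S, C (fCoeff f S) * ∏ i ∈ S, C (sgnB (x i)) * (1 - C (w i) * (1 - X))

lemma eval_segmentPoly (f : (Fin n → Bool) → ℝ) (x : Fin n → Bool) (w : Fin n → ℝ) (t : ℝ) :
    (segmentPoly f x w).eval t = multilinExt f fun i => sgnB (x i) * (1 - w i * (1 - t)) := by
  simp [segmentPoly, multilinExt, eval_finsetSum, eval_prod]

lemma natDegree_segmentPoly_le {f : (Fin n → Bool) → ℝ} {d : ℕ} (hdeg : degLE f d)
    (x : Fin n → Bool) (w : Fin n → ℝ) : (segmentPoly f x w).natDegree ≤ d := by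
  refine natDegree_sum_le_of_forall_le _ _ fun S _ => ?_
  by_cases hS : d < S.card
  · simp [hdeg S hS]
  have hlin : ∀ i, (C (sgnB (x i)) * (1 - C (w i) * (1 - X))).natDegree ≤ 1 := fun i =>
    (natDegree_C_mul_le _ _).trans <| (natDegree_sub_le _ _).trans <| max_le (by simp) <|
      (natDegree_C_mul_le _ _).trans <| (natDegree_sub_le _ _).trans (by simp)
  refine (natDegree_C_mul_le _ _).trans <| (natDegree_prod_le _ _).trans <|
    (Finset.sum_le_card_nsmul _ _ 1 fun i _ => hlin i).trans ?_
  simpa using hS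

lemma derivative_segmentPoly_eval_one (f : (Fin n → Bool) → ℝ) (x : Fin n → Bool)
    (w : Fin n → ℝ) :
    (derivative (segmentPoly f x w)).eval 1 = ∑ i, w i * (f x - f (flipAt i x)) / 2 := by
  have hterm : ∀ S : Finset (Fin n),
      (derivative (C (fCoeff f S) * ∏ i ∈ S, C (sgnB (x i)) * (1 - C (w i) * (1 - X)))).eval 1
        = ∑ i, if i ∈ S then w i * (fCoeff f S * chiB S x) else 0 := fun S => by
    rw [derivative_C_mul, derivative_prod_finset, eval_mul, eval_C, eval_finsetSum,
      Finset.sum_ite_mem, Finset.univ_inter, Finset.mul_sum]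
    refine Finset.sum_congr rfl fun i hi => ?_
    simp only [eval_mul, eval_prod, derivative_mul, derivative_C, derivative_sub, derivative_one,
      derivative_X, eval_C, eval_sub, eval_one, eval_X, eval_zero, eval_add, sub_self, mul_zero,
      sub_zero, mul_one]
    rw [chiB, ← Finset.mul_prod_erase _ _ hi]
    ring
  simp only [segmentPoly, derivative_sum, eval_finsetSum, hterm]
  rw [Finset.sum_comm]
  refine Finset.sum_congr rfl fun i _ => ?_
  rw [← Finset.sum_filter, ← Finset.mul_sum, sum_fCoeff_mul_chiB_of_mem]
  ring

theorem abs_sum_mul_sub_flipAt_le {f : (Fin n → Bool) → ℝ} {d : ℕ}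
    (hf : ∀ z, f z ∈ Set.Icc (0 : ℝ) 1) (hdeg : degLE f d) (x : Fin n → Bool)
    {w : Fin n → ℝ} (hw : ∀ i, w i ∈ Set.Icc (0 : ℝ) 1) :
    |∑ i, w i * (f x - f (flipAt i x))| ≤ d ^ 2 := by
  have hbound : ∀ t ∈ Set.Icc (-1 : ℝ) 1, |(C 2 * segmentPoly f x w - 1).eval t| ≤ 1 := by
    intro t ht
    have hy : ∀ i, |sgnB (x i) * (1 - w i * (1 - t))| ≤ 1 := fun i => by
      rw [abs_mul, abs_sgnB, one_mul, abs_le]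
      obtain ⟨hw0, hw1⟩ := hw i
      have h1t : 0 ≤ 1 - t := by linarith [ht.2]
      constructor <;> nlinarith [ht.1, mul_nonneg hw0 h1t, mul_nonneg (sub_nonneg.mpr hw1) h1t]
    have := multilinExt_mem_Icc hf hy
    rw [eval_sub, eval_mul, eval_C, eval_one, eval_segmentPoly, abs_le]
    constructor <;> linarith [this.1, this.2]
  have hdeg' : (C 2 * segmentPoly f x w - 1).natDegree ≤ d :=
    (natDegree_sub_le _ _).trans <| max_le ((natDegree_C_mul_le _ _).trans
      (natDegree_segmentPoly_le hdeg x w)) (by simp)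
  have := abs_derivative_eval_one_le hdeg' hbound
  rwa [derivative_sub, derivative_C_mul, derivative_one, sub_zero, eval_mul, eval_C,
    derivative_segmentPoly_eval_one, ← Finset.sum_div, mul_div_cancel₀ _ two_ne_zero] at this

theorem sum_abs_sub_flipAt_le {f : (Fin n → Bool) → ℝ} {d : ℕ}
    (hf : ∀ z, f z ∈ Set.Icc (0 : ℝ) 1) (hdeg : degLE f d) (x : Fin n → Bool) :
    ∑ i, |f x - f (flipAt i x)| ≤ 2 * d ^ 2 := by
  set D := fun i => f x - f (flipAt i x)
  have hpos := abs_sum_mul_sub_flipAt_le hf hdeg x (w := fun i => if 0 ≤ D i then 1 else 0)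
    fun i => by split_ifs <;> simp
  have hneg := abs_sum_mul_sub_flipAt_le hf hdeg x (w := fun i => if 0 ≤ D i then 0 else 1)
    fun i => by split_ifs <;> simp
  have hsplit : ∑ i, |D i| = ∑ i, (if 0 ≤ D i then 1 else 0) * D i
      - ∑ i, (if 0 ≤ D i then 0 else 1) * D i := by
    rw [← Finset.sum_sub_distrib]
    refine Finset.sum_congr rfl fun i _ => ?_
    split_ifs with h
    · rw [abs_of_nonneg h]; ring
    · rw [abs_of_neg (not_le.mp h)]; ring
  rw [hsplit]
  linarith [abs_le.mp hpos, abs_le.mp hneg]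

end Sensitivity

lemma sum_sq_le_mul_sum_abs {ι : Type*} (s : Finset ι) (a : ι → ℝ) {c : ℝ}
    (h : ∀ i ∈ s, |a i| ≤ c) : ∑ i ∈ s, a i ^ 2 ≤ c * ∑ i ∈ s, |a i| := by
  rw [Finset.mul_sum]
  refine Finset.sum_le_sum fun i hi => ?_
  rw [← sq_abs, sq]
  exact mul_le_mul_of_nonneg_right (h i hi) (abs_nonneg _)

open Classical in
def sensitiveInputs {n : ℕ} (f : (Fin n → Bool) → ℝ) (ε : ℝ) : Finset (Fin n → Bool) :=
  univ.filter fun x => ∃ i, ε ≤ |f x - f (flipAt i x)|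

theorem four_mul_totalVar_le_card_sensitiveInputs {n d : ℕ} {f : (Fin n → Bool) → ℝ}
    (hf : ∀ x, f x ∈ Set.Icc (0 : ℝ) 1) (hdeg : degLE f d) {ε : ℝ} (hε : 0 ≤ ε) :
    4 * totalVar f ≤ 2 * d ^ 2 * ((sensitiveInputs f ε).card / 2 ^ n + ε) := by
  set B := sensitiveInputs f ε
  have hpoint : ∀ x,
      ∑ i, (f x - f (flipAt i x)) ^ 2 ≤ 2 * d ^ 2 * ((if x ∈ B then 1 else 0) + ε) := by
    intro x
    have hc : ∀ i, |f x - f (flipAt i x)| ≤ if x ∈ B then 1 else ε := fun i => by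
      split_ifs with hx
      · exact abs_sub_le_iff.mpr ⟨by linarith [(hf x).2, (hf (flipAt i x)).1],
          by linarith [(hf x).1, (hf (flipAt i x)).2]⟩
      · simp only [B, sensitiveInputs, Finset.mem_filter, Finset.mem_univ, true_and, not_exists, not_le] at hx
        exact (hx i).le
    have hc0 : (0 : ℝ) ≤ if x ∈ B then 1 else ε := by split_ifs <;> linarith
    calc ∑ i, (f x - f (flipAt i x)) ^ 2 ≤ (if x ∈ B then 1 else ε) * (2 * d ^ 2) :=
          (sum_sq_le_mul_sum_abs _ _ fun i _ => hc i).trans <|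
            mul_le_mul_of_nonneg_left (sum_abs_sub_flipAt_le hf hdeg x) hc0
      _ ≤ 2 * d ^ 2 * ((if x ∈ B then 1 else 0) + ε) := by
          split_ifs <;> nlinarith [sq_nonneg (d : ℝ)]
  calc 4 * totalVar f ≤ bexpect fun x => ∑ i, (f x - f (flipAt i x)) ^ 2 :=
        four_mul_totalVar_le f
    _ ≤ (∑ x, 2 * d ^ 2 * ((if x ∈ B then 1 else 0) + ε)) / 2 ^ n :=
        div_le_div_of_nonneg_right (Finset.sum_le_sum fun x _ => hpoint x) (by positivity)
    _ = 2 * d ^ 2 * (B.card / 2 ^ n + ε) := by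
        rw [← Finset.mul_sum, Finset.sum_add_distrib, Finset.sum_boole]
        simp only [Finset.filter_mem_eq_of_subset (Finset.subset_univ B), Finset.sum_const,
          Finset.card_univ, Fintype.card_pi, Fintype.card_bool, Finset.prod_const,
          Fintype.card_fin, nsmul_eq_mul, Nat.cast_pow, Nat.cast_ofNat]
        field_simp

open Classical in
/-- many inputs have a sensitive coordinate. -/
theorem many_sensitive_inputs :
    ∃ C > (0:ℝ), ∃ d₀ : ℕ, ∀ d : ℕ, d₀ ≤ d → 2 ≤ d →
      ∀ (n : ℕ) (f : (Fin n → Bool) → ℝ),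
        (∀ x, f x ∈ Set.Icc (0:ℝ) 1) →
        degLE f d →
        1 / (d : ℝ) ≤ totalVar f →
        ((univ.filter (fun x : Fin n → Bool =>
              ∃ i : Fin n, totalVar f / (d : ℝ) ^ C ≤
                |f x - f (Function.update x i (!(x i)))|)).card : ℝ) / 2 ^ n
          ≥ totalVar f ^ 3 / (d : ℝ) ^ C := by
  refine ⟨3, by norm_num, 0, fun d _ hd n f hf hdeg _ => ?_⟩
  have hd : (2 : ℝ) ≤ d := by exact_mod_cast hd
  have hV0 : 0 ≤ totalVar f := totalVar_nonneg f
  have hV1 : totalVar f ≤ 1 :=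
    totalVar_le_one fun x => abs_le.mpr ⟨by linarith [(hf x).1], (hf x).2⟩
  have hε : 2 * d ^ 2 * (totalVar f / d ^ 3) ≤ totalVar f := by
    rw [show (2 : ℝ) * d ^ 2 * (totalVar f / d ^ 3) = 2 / d * totalVar f by field_simp]
    exact mul_le_of_le_one_left hV0 ((div_le_one (by positivity)).mpr hd)
  have hμ : ∀ μ : ℝ, 4 * totalVar f ≤ 2 * d ^ 2 * (μ + totalVar f / d ^ 3) →
      totalVar f ^ 3 / d ^ 3 ≤ μ := fun μ h => by
    have h3V : 3 * totalVar f ≤ 2 * d ^ 2 * μ := by rw [mul_add] at h; linarith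
    rw [div_le_iff₀ (by positivity)]
    have h3Vd := mul_le_mul_of_nonneg_right h3V (by positivity : (0 : ℝ) ≤ d)
    have h2V : 2 * totalVar f ≤ totalVar f * d := by nlinarith
    have hV3 : totalVar f ^ 3 ≤ totalVar f := pow_le_of_le_one hV0 hV1 (by norm_num)
    nlinarith
  rw [show (d : ℝ) ^ (3 : ℝ) = d ^ 3 by norm_cast]
  exact hμ _ (four_mul_totalVar_le_card_sensitiveInputs hf hdeg (by positivity))
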